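/- (Regularity part of Lemma 1.) Let a > b > 0 and let Φ : ℝ⁹ → ℝ⁵ be the polynomial map whose components are the five constraint polynomials ℓ² − (2p²m² + 2mh + 1), Q₁² + u₁² − 1, P₁² − f₁(u₁), Q₂² + u₂² − 1, P₂² − f₂(u₂). Then at every point x ∈ ℝ⁹ with Φ(x) = 0, the derivative DΦ(x) : ℝ⁹ → ℝ⁵ is surjective (the Jacobian matrix has rank 5); hence ℳ = Φ⁻¹(0) is a smooth 4-dimensional submanifold of ℝ⁹. -/

import Mathlib

/-- The five constraint polynomials of the covering manifold `ℳ`, as a map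
`Φ : ℝ⁹ → ℝ⁵` in coordinates `(ℓ, m, h, u₁, Q₁, P₁, u₂, Q₂, P₂)`, with
`p² = a²+b²`, `h_* = −(h + p²m)/2`, `f₁(u) = h_*u² + aℓu − a²m`,
`f₂(u) = b²mu² − bℓu − h_*`. -/
noncomputable def constraintMap (a b : ℝ) (x : Fin 9 → ℝ) : Fin 5 → ℝ :=
  ![x 0 ^ 2 - (2 * (a ^ 2 + b ^ 2) * (x 1) ^ 2 + 2 * x 1 * x 2 + 1),
    (x 4) ^ 2 + (x 3) ^ 2 - 1,
    (x 5) ^ 2 - ((-(x 2 + (a ^ 2 + b ^ 2) * x 1) / 2) * (x 3) ^ 2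
      + a * x 0 * x 3 - a ^ 2 * x 1),
    (x 7) ^ 2 + (x 6) ^ 2 - 1,
    (x 8) ^ 2 - (b ^ 2 * x 1 * (x 6) ^ 2 - b * x 0 * x 6
      - (-(x 2 + (a ^ 2 + b ^ 2) * x 1) / 2))]

noncomputable abbrev pr (j : Fin 9) : (Fin 9 → ℝ) →L[ℝ] ℝ :=
  ContinuousLinearMap.proj j

noncomputable def row0 (a b : ℝ) (x : Fin 9 → ℝ) : (Fin 9 → ℝ) →L[ℝ] ℝ :=
  (2 * x 0) • pr 0 + (-(4 * (a^2+b^2) * x 1 + 2 * x 2)) • pr 1 + (-(2 * x 1)) • pr 2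

noncomputable def row1 (x : Fin 9 → ℝ) : (Fin 9 → ℝ) →L[ℝ] ℝ :=
  (2 * x 3) • pr 3 + (2 * x 4) • pr 4

noncomputable def row2 (a b : ℝ) (x : Fin 9 → ℝ) : (Fin 9 → ℝ) →L[ℝ] ℝ :=
  (-(a * x 3)) • pr 0 + ((a^2+b^2)/2 * (x 3)^2 + a^2) • pr 1 + ((x 3)^2/2) • pr 2
    + ((x 2 + (a^2+b^2) * x 1) * x 3 - a * x 0) • pr 3 + (2 * x 5) • pr 5

noncomputable def row3 (x : Fin 9 → ℝ) : (Fin 9 → ℝ) →L[ℝ] ℝ :=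
  (2 * x 6) • pr 6 + (2 * x 7) • pr 7

noncomputable def row4 (a b : ℝ) (x : Fin 9 → ℝ) : (Fin 9 → ℝ) →L[ℝ] ℝ :=
  (b * x 6) • pr 0 + (-(b^2 * (x 6)^2 + (a^2+b^2)/2)) • pr 1 + (-(1/2 : ℝ)) • pr 2
    + (b * x 0 - 2 * b^2 * x 1 * x 6) • pr 6 + (2 * x 8) • pr 8

noncomputable def rows (a b : ℝ) (x : Fin 9 → ℝ) : Fin 5 → ((Fin 9 → ℝ) →L[ℝ] ℝ) :=
  ![row0 a b x, row1 x, row2 a b x, row3 x, row4 a b x]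

theorem hasFD (a b : ℝ) (x : Fin 9 → ℝ) :
    HasFDerivAt (constraintMap a b) (ContinuousLinearMap.pi (rows a b x)) x := by
  apply hasFDerivAt_pi''
  intro i
  have hp : ∀ j : Fin 9, HasFDerivAt (fun y : Fin 9 → ℝ => y j) (pr j) x :=
    fun j => hasFDerivAt_apply j x
  fin_cases i <;>
    simp only [constraintMap, rows, Matrix.cons_val_zero, Matrix.cons_val_one, Matrix.head_cons,
      Matrix.cons_val_two, Matrix.tail_cons, Matrix.cons_val_three, Matrix.cons_val_four,
      ContinuousLinearMap.proj_pi, Fin.isValue, pow_two, div_eq_mul_inv]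
  · exact (((hp 0).mul (hp 0)).sub
      (((((hp 1).mul (hp 1)).const_mul (2*(a*a+b*b))).add (((hp 1).const_mul 2).mul (hp 2))).add_const 1)).congr_fderiv
      (by ext v; simp [row0, pow_two]; ring)
  · exact (((hp 4).mul (hp 4)).add (((hp 3).mul (hp 3)))).sub_const 1 |>.congr_fderiv
      (by ext v; simp [row1]; ring)
  · exact (((hp 5).mul (hp 5)).sub
      (((((hp 2).add ((hp 1).const_mul (a*a+b*b))).neg.mul_const (2⁻¹:ℝ)).mul ((hp 3).mul (hp 3))).add
        (((hp 0).const_mul a).mul (hp 3)) |>.sub ((hp 1).const_mul (a*a)))).congr_fderiv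
      (by ext v; simp [row2, pow_two]; ring)
  · exact (((hp 7).mul (hp 7)).add (((hp 6).mul (hp 6)))).sub_const 1 |>.congr_fderiv
      (by ext v; simp [row3]; ring)
  · exact (((hp 8).mul (hp 8)).sub
      (((((hp 1).const_mul (b*b)).mul ((hp 6).mul (hp 6))).sub (((hp 0).const_mul b).mul (hp 6))).sub
        (((hp 2).add ((hp 1).const_mul (a*a+b*b))).neg.mul_const (2⁻¹:ℝ)))).congr_fderiv
      (by ext v; simp [row4, pow_two]; ring)

set_option maxHeartbeats 1000000 in
/-- Regularity part of Lemma 1: Let `a > b > 0` and let `Φ : ℝ⁹ → ℝ⁵` be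
the constraint map. Then at every point `x ∈ ℝ⁹` with `Φ(x) = 0`, the derivative
`DΦ(x) : ℝ⁹ → ℝ⁵` is surjective (the Jacobian matrix has rank 5); hence
`ℳ = Φ⁻¹(0)` is a smooth 4-dimensional submanifold of `ℝ⁹`. -/
theorem constraintMap_deriv_surjective (a b : ℝ) (hb : 0 < b) (hab : b < a) :
    ∀ x : Fin 9 → ℝ, constraintMap a b x = 0 →
      Function.Surjective (fderiv ℝ (constraintMap a b) x) := by
  intro x hx
  have ha : 0 < a := hb.trans hab
  have C0 := congrFun hx 0
  have C1 := congrFun hx 1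
  have C2 := congrFun hx 2
  have C3 := congrFun hx 3
  have C4 := congrFun hx 4
  simp only [constraintMap, Matrix.cons_val_zero, Matrix.cons_val_one, Matrix.head_cons,
    Matrix.cons_val_two, Matrix.tail_cons, Matrix.cons_val_three, Matrix.cons_val_four,
    Pi.zero_apply] at C0 C1 C2 C3 C4
  -- basic consequences of the constraints
  have hu1 : x 3 ^ 2 ≤ 1 := by nlinarith [sq_nonneg (x 4), C1]
  have hu2 : x 6 ^ 2 ≤ 1 := by nlinarith [sq_nonneg (x 7), C3]
  have hI1 : (x 0 * x 3 - 2*a*x 1)^2 = x 3^2 - 4*x 1*x 5^2 := by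
    linear_combination (x 3)^2 * C0 + 4 * x 1 * C2
  have hI2 : (x 0 - 2*b*x 1*x 6)^2 = 1 + 4*x 1*x 8^2 := by
    linear_combination C0 - 4*x 1*C4
  have habu : 0 < a - b*(x 3*x 6) := by
    nlinarith [sq_nonneg (x 3 - x 6), sq_nonneg (x 3 + x 6), hu1, hu2]
  rw [(hasFD a b x).fderiv]
  rw [← ContinuousLinearMap.coe_coe, ← LinearMap.dualMap_injective_iff]
  rw [injective_iff_map_eq_zero]
  intro φ hφ
  set lam : Fin 5 → ℝ := fun i => φ (fun j => if i = j then 1 else 0) with hlam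
  have hrep : ∀ w : Fin 5 → ℝ, φ w = ∑ i, w i * lam i := by
    intro w
    rw [LinearMap.pi_apply_eq_sum_univ φ w]
    simp [hlam, smul_eq_mul]
  have hE : ∀ j : Fin 9, ∑ i, ((ContinuousLinearMap.pi (rows a b x)) (Pi.single j 1)) i * lam i = 0 := by
    intro j
    rw [← hrep]
    have h2 := LinearMap.congr_fun hφ (Pi.single j 1)
    simp at h2 ⊢
    exact h2
  have E0 := hE 0
  have E1 := hE 1
  have E2 := hE 2
  have E3 := hE 3
  have E4 := hE 4
  have E5 := hE 5
  have E6 := hE 6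
  have E7 := hE 7
  have E8 := hE 8
  simp only [ContinuousLinearMap.pi_apply, rows, Fin.sum_univ_five, Matrix.cons_val_zero,
    Matrix.cons_val_one, Matrix.head_cons, Matrix.cons_val_two, Matrix.tail_cons,
    Matrix.cons_val_three, Matrix.cons_val_four, row0, row1, row2, row3, row4,
    ContinuousLinearMap.add_apply, ContinuousLinearMap.smul_apply, ContinuousLinearMap.proj_apply,
    smul_eq_mul, Pi.single_apply, Fin.reduceEq, reduceIte, mul_one, mul_zero, add_zero, zero_add,
    if_true] at E0 E1 E2 E3 E4 E5 E6 E7 E8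
  have e24 : lam 4 = lam 2 * x 3^2 - 4 * lam 0 * x 1 := by linear_combination -2*E2
  obtain ⟨hL0, hL2, hL4⟩ : lam 0 = 0 ∧ lam 2 = 0 ∧ lam 4 = 0 := by
    rcases eq_or_ne (x 5) 0 with hP1 | hP1 <;> rcases eq_or_ne (x 8) 0 with hP2 | hP2
    · -- P₁ = 0, P₂ = 0
      have hB : 2*lam 0*(x 0 - 2*b*x 1*x 6) + lam 2*x 3*(b*x 3*x 6 - a) = 0 := by
        linear_combination E0 - b*x 6*e24
      have hA : -4*lam 0*b*x 6*(x 0 - 2*b*x 1*x 6) + lam 2*(a^2 - b^2*x 3^2*x 6^2) = 0 := by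
        linear_combination E1 + (b^2*x 6^2 + (a^2+b^2)/2)*e24 - 4*lam 0*C4 + 4*lam 0*x 8*hP2
      have key2 : lam 2 * (a - b*x 3*x 6)^2 = 0 := by
        linear_combination hA + 2*b*x 6*hB
      have habu : 0 < a - b*x 3*x 6 := by linarith [habu]
      have hL2 : lam 2 = 0 :=
        (mul_eq_zero.mp key2).resolve_right (pow_ne_zero 2 (ne_of_gt habu))
      have hL0D : lam 0 * (x 0 - 2*b*x 1*x 6) = 0 := by
        linear_combination (1/2)*hB - (x 3*(b*x 3*x 6 - a)/2)*hL2
      have hD2 : (x 0 - 2*b*x 1*x 6)^2 = 1 := by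
        linear_combination hI2 + 4*x 1*x 8*hP2
      have hL0 : lam 0 = 0 := by
        linear_combination (x 0 - 2*b*x 1*x 6)*hL0D - lam 0*hD2
      have hL4 : lam 4 = 0 := by linear_combination e24 + x 3^2*hL2 - 4*x 1*hL0
      exact ⟨hL0, hL2, hL4⟩
    · -- P₁ = 0, P₂ ≠ 0
      have hL4 : lam 4 = 0 := by
        have h8 : lam 4 * x 8 = 0 := by linear_combination E8/2
        exact (mul_eq_zero.mp h8).resolve_right hP2
      have e2 : lam 2*x 3^2 = 4*lam 0*x 1 := by linear_combination 2*E2 + hL4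
      have e0 : lam 2*a*x 3 = 2*lam 0*x 0 := by linear_combination -E0 + b*x 6*hL4
      have hL0D1 : lam 0*(x 0*x 3 - 2*a*x 1) = 0 := by
        linear_combination (a/2)*e2 - (x 3/2)*e0
      have hsq : (lam 0*x 3)^2 = 0 := by
        linear_combination (lam 0*(x 0*x 3 - 2*a*x 1))*hL0D1 - lam 0^2*hI1 + 4*lam 0^2*x 1*x 5*hP1
      have hL0u : lam 0*x 3 = 0 := sq_eq_zero_iff.mp hsq
      have hL0l : lam 0^2*x 0 = 0 := by
        linear_combination (-(lam 0)/2)*e0 + (a*lam 2/2)*hL0u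
      have hL0m : lam 0^2*x 1 = 0 := by
        linear_combination (-(lam 0)/4)*e2 + (lam 2*x 3/4)*hL0u
      have hL0sq : lam 0^2 = 0 := by
        linear_combination -lam 0^2*C0 + x 0*hL0l - (2*(a^2+b^2)*x 1 + 2*x 2)*hL0m
      have hL0 : lam 0 = 0 := sq_eq_zero_iff.mp hL0sq
      have hL2u : a*(lam 2*x 3) = 0 := by linear_combination e0 + 2*x 0*hL0
      have hL2x3 : lam 2*x 3 = 0 := (mul_eq_zero.mp hL2u).resolve_left (ne_of_gt ha)
      have hL2a : lam 2*a^2 = 0 := by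
        linear_combination E1 + (4*(a^2+b^2)*x 1 + 2*x 2)*hL0 + (b^2*x 6^2 + (a^2+b^2)/2)*hL4
          - ((a^2+b^2)/2*x 3)*hL2x3
      have hL2 : lam 2 = 0 :=
        (mul_eq_zero.mp hL2a).resolve_right (pow_ne_zero 2 (ne_of_gt ha))
      exact ⟨hL0, hL2, hL4⟩
    · -- P₁ ≠ 0, P₂ = 0
      have hL2 : lam 2 = 0 := by
        have h5 : lam 2 * x 5 = 0 := by linear_combination E5/2
        exact (mul_eq_zero.mp h5).resolve_right hP1
      have e24' : lam 4 = -4*lam 0*x 1 := by linear_combination -2*E2 + x 3^2*hL2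
      have hL0D : lam 0*(x 0 - 2*b*x 1*x 6) = 0 := by
        linear_combination E0/2 + (a*x 3/2)*hL2 - (b*x 6/2)*e24'
      have hD2 : (x 0 - 2*b*x 1*x 6)^2 = 1 := by
        linear_combination hI2 + 4*x 1*x 8*hP2
      have hL0 : lam 0 = 0 := by
        linear_combination (x 0 - 2*b*x 1*x 6)*hL0D - lam 0*hD2
      have hL4 : lam 4 = 0 := by linear_combination e24' - 4*x 1*hL0
      exact ⟨hL0, hL2, hL4⟩
    · -- P₁ ≠ 0, P₂ ≠ 0
      have hL2 : lam 2 = 0 := by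
        have h5 : lam 2 * x 5 = 0 := by linear_combination E5/2
        exact (mul_eq_zero.mp h5).resolve_right hP1
      have hL4 : lam 4 = 0 := by
        have h8 : lam 4 * x 8 = 0 := by linear_combination E8/2
        exact (mul_eq_zero.mp h8).resolve_right hP2
      have hL0l : lam 0*x 0 = 0 := by
        linear_combination E0/2 + (a*x 3/2)*hL2 - (b*x 6/2)*hL4
      have hL0m : lam 0*x 1 = 0 := by
        linear_combination -(1/2)*E2 + (x 3^2/4)*hL2 - (1/4)*hL4
      have hL0sq : lam 0^2 = 0 := by
        linear_combination -lam 0^2*C0 + lam 0*x 0*hL0l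
          - (2*(a^2+b^2)*x 1*lam 0 + 2*x 2*lam 0)*hL0m
      have hL0 : lam 0 = 0 := sq_eq_zero_iff.mp hL0sq
      exact ⟨hL0, hL2, hL4⟩
  have h3 : lam 1*x 3 = 0 := by
    linear_combination E3/2 - (((x 2 + (a^2+b^2)*x 1)*x 3 - a*x 0)/2)*hL2
  have h4 : lam 1*x 4 = 0 := by linear_combination E4/2
  have hL1 : lam 1 = 0 := by linear_combination -lam 1*C1 + x 3*h3 + x 4*h4
  have h6 : lam 3*x 6 = 0 := by
    linear_combination E6/2 - ((b*x 0 - 2*b^2*x 1*x 6)/2)*hL4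
  have h7 : lam 3*x 7 = 0 := by linear_combination E7/2
  have hL3 : lam 3 = 0 := by linear_combination -lam 3*C3 + x 6*h6 + x 7*h7
  apply LinearMap.ext
  intro w
  rw [LinearMap.zero_apply, hrep w, Fin.sum_univ_five, hL0, hL1, hL2, hL3, hL4]
  ring
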